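/- Let T be a finite tree rooted at r with N vertices and let k be a natural number with N ≤ 2k. Then the set H = {v : |T(v)| > k} is totally ordered by the ancestor relation. Consequently, if H is nonempty it has a unique deepest element v_H (a unique element of which all others are ancestors), H is exactly the vertex set of the tree path from r to v_H, and T(v_H) is the unique minimal subtree of T having more than k vertices. -/

import Mathlib

/-!
In a tree, two vertices with a common descendant lie on the path from the root to it and are
therefore comparable; hence two descendant sets are either nested or disjoint. Two disjoint sets
with more than `k` vertices each do not fit into `N ≤ 2k` vertices, so the heavy vertices are
pairwise comparable, and the heavy vertex with the fewest descendants is below all the others.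
-/

/-- `u` is an ancestor of `v` in the tree `T` rooted at `r`:
`u` lies on the (unique) path in `T` from `r` to `v`. -/
def IsAncestor {V : Type*} (T : SimpleGraph V) (r u v : V) : Prop :=
  ∀ p : T.Walk r v, p.IsPath → u ∈ p.support

/-- `T(v)`: the set of descendants of `v` in the tree `T` rooted at `r`. -/
def descendants {V : Type*} (T : SimpleGraph V) (r v : V) : Set V :=
  {w | IsAncestor T r v w}

open SimpleGraph

namespace SimpleGraph.Walk

variable {V : Type*} [DecidableEq V] {G : SimpleGraph V} {a b u w : V}

lemma mem_support_takeUntil_or (p : G.Walk a b) (hu : u ∈ p.support) (hw : w ∈ p.support) :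
    u ∈ (p.takeUntil w hw).support ∨ w ∈ (p.takeUntil u hu).support :=
  (List.prefix_or_prefix_of_prefix (p.support_takeUntil_prefix_support hu)
    (p.support_takeUntil_prefix_support hw)).imp
    (fun h => h.subset (end_mem_support _)) (fun h => h.subset (end_mem_support _))

end SimpleGraph.Walk

section Ancestor

variable {V : Type*} {T : SimpleGraph V} {r u v w : V}

lemma IsAncestor.refl (v : V) : IsAncestor T r v v := fun p _ => p.end_mem_support

lemma IsAncestor.trans (huv : IsAncestor T r u v) (hvw : IsAncestor T r v w) :
    IsAncestor T r u w := by
  classical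
  intro p hp
  have hv := hvw p hp
  exact p.support_takeUntil_subset_support hv (huv _ (hp.takeUntil hv))

lemma IsAncestor.antisymm (hr : T.Reachable r v) (huv : IsAncestor T r u v)
    (hvu : IsAncestor T r v u) : u = v := by
  classical
  obtain ⟨p, hp⟩ := hr.exists_isPath
  have hu := huv p hp
  by_contra huv
  exact Walk.endpoint_notMem_support_takeUntil hp hu (Ne.symm huv) (hvu _ (hp.takeUntil hu))

lemma SimpleGraph.IsAcyclic.isAncestor_iff_mem_support (hT : T.IsAcyclic) {p : T.Walk r v}
    (hp : p.IsPath) : IsAncestor T r u v ↔ u ∈ p.support := by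
  refine ⟨fun hu => hu p hp, fun hu q hq => ?_⟩
  have hqp : (⟨q, hq⟩ : T.Path r v) = ⟨p, hp⟩ := (hT.subsingleton_path r v).elim _ _
  rwa [show q = p from congrArg Subtype.val hqp]

lemma SimpleGraph.IsAcyclic.isAncestor_total (hT : T.IsAcyclic) (hr : T.Reachable r w)
    (hu : IsAncestor T r u w) (hv : IsAncestor T r v w) :
    IsAncestor T r u v ∨ IsAncestor T r v u := by
  classical
  obtain ⟨p, hp⟩ := hr.exists_isPath
  have hu' := hu p hp
  have hv' := hv p hp
  exact (p.mem_support_takeUntil_or hu' hv').imp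
    (hT.isAncestor_iff_mem_support (hp.takeUntil hv')).mpr
    (hT.isAncestor_iff_mem_support (hp.takeUntil hu')).mpr

lemma descendants_subset_descendants_iff :
    descendants T r v ⊆ descendants T r u ↔ IsAncestor T r u v :=
  ⟨fun h => h (IsAncestor.refl v), fun h _ hw => h.trans hw⟩

lemma IsAncestor.ncard_descendants_le [Finite V] (h : IsAncestor T r u v) :
    (descendants T r v).ncard ≤ (descendants T r u).ncard :=
  Set.ncard_le_ncard (descendants_subset_descendants_iff.mpr h)

end Ancestor

section Heavy

variable {V : Type*} [Finite V] {T : SimpleGraph V} {r u v : V} {k : ℕ}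

lemma SimpleGraph.IsTree.isAncestor_total_of_lt_ncard_descendants (hT : T.IsTree)
    (hN : Nat.card V ≤ 2 * k) (hu : k < (descendants T r u).ncard)
    (hv : k < (descendants T r v).ncard) : IsAncestor T r u v ∨ IsAncestor T r v u := by
  obtain ⟨w, hwu, hwv⟩ := Set.nonempty_inter_of_lt_ncard_add_ncard
    (s := descendants T r u) (t := descendants T r v) (by omega)
  exact hT.isAcyclic.isAncestor_total (hT.connected r w) hwu hwv

lemma SimpleGraph.IsTree.exists_forall_isAncestor_of_lt_ncard_descendants (hT : T.IsTree)
    (hN : Nat.card V ≤ 2 * k) (hne : ∃ v, k < (descendants T r v).ncard) :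
    ∃ vH, k < (descendants T r vH).ncard ∧
      ∀ u, k < (descendants T r u).ncard → IsAncestor T r u vH := by
  obtain ⟨vH, hvH, hmin⟩ := Set.exists_min_image {v | k < (descendants T r v).ncard}
    (fun v => (descendants T r v).ncard) (Set.toFinite _) hne
  refine ⟨vH, hvH, fun u hu => ?_⟩
  rcases hT.isAncestor_total_of_lt_ncard_descendants hN hu hvH with huvH | hvHu
  · exact huvH
  · have hsub := descendants_subset_descendants_iff.mpr hvHu
    exact descendants_subset_descendants_iff.mp (Set.eq_of_subset_of_ncard_le hsub (hmin u hu)).ge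

end Heavy

/-- Let `T` be a finite rooted tree with `N ≤ 2k` vertices. Then
`H = {v : |T(v)| > k}` is totally ordered by the ancestor relation; consequently, if `H` is
nonempty it has a unique deepest element `v_H` (of which all elements of `H` are ancestors),
`H` is exactly the vertex set of the tree path from `r` to `v_H` (the set of ancestors of
`v_H`), and `T(v_H)` is the unique minimal subtree with more than `k` vertices (it is
contained in `T(v)` for every `v` with `|T(v)| > k`). -/
theorem heavy_subtrees_form_chain {V : Type*} [Fintype V] (T : SimpleGraph V) (r : V)
    (hT : T.IsTree) (k : ℕ) (hN : Fintype.card V ≤ 2 * k)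
    (H : Set V) (hH : H = {v | k < (descendants T r v).ncard}) :
    (∀ u ∈ H, ∀ v ∈ H, IsAncestor T r u v ∨ IsAncestor T r v u) ∧
    (H.Nonempty → ∃! vH, vH ∈ H ∧ ∀ u ∈ H, IsAncestor T r u vH) ∧
    (∀ vH ∈ H, (∀ u ∈ H, IsAncestor T r u vH) →
      H = {u | IsAncestor T r u vH} ∧
      ∀ v : V, k < (descendants T r v).ncard → descendants T r vH ⊆ descendants T r v) := by
  subst hH
  rw [← Nat.card_eq_fintype_card] at hN
  refine ⟨fun u hu v hv => hT.isAncestor_total_of_lt_ncard_descendants hN hu hv,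
    fun hne => ?_, fun vH hvH hdeep => ⟨?_, fun v hv => ?_⟩⟩
  · obtain ⟨vH, hvH, hdeep⟩ := hT.exists_forall_isAncestor_of_lt_ncard_descendants hN hne
    exact ⟨vH, ⟨hvH, hdeep⟩, fun v ⟨hv, hvdeep⟩ =>
      IsAncestor.antisymm (hT.connected r vH) (hdeep v hv) (hvdeep vH hvH)⟩
  · ext u
    exact ⟨hdeep u, fun hu => hvH.trans_le hu.ncard_descendants_le⟩
  · exact descendants_subset_descendants_iff.mpr (hdeep v hv)
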